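/- Let G be a connected, non-complete strongly regular graph with parameters (n, k, λ, μ) whose real adjacency matrix has exactly three distinct eigenvalues k, r, s with r ≥ 0 > s, the eigenspaces of r and s having dimensions m_1 and m_2 respectively. If k = m_2 then, setting v = r − s and g = r, one has n = v², k = g(v + 1), λ = (g + 1)(g + 2) − v − 2, and μ = g(g + 1) (that is, G has the parameters of a negative Latin square type graph NL_g(v)). -/

import Mathlib

open Matrix

/-!
Diagonalising the adjacency matrix `A` gives `n = 1 + m₁ + m₂`, and `tr A = 0` gives
`k + m₁ r + m₂ s = 0`. Eigenvectors for `r` and `s` are orthogonal to the all-ones vector, so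
`A² = kI + λA + μ(J - I - A)` makes `r, s` the roots of `t² = (λ - μ) t + (k - μ)`, while the
all-ones vector itself gives `k² = k + λk + μ(n - 1 - k)`. With `m₂ = k` these identities solve
for `n, k, λ, μ` in terms of `r, s`; the one degenerate case, `s = -1`, forces `n = k + 1`, i.e.
a complete graph.
-/

open Module End Finset

namespace Matrix

variable {𝕜 : Type*} [RCLike 𝕜] {n : Type*} [Fintype n] [DecidableEq n]

theorem finrank_eigenspace_toLpLin (A : Matrix n n 𝕜) (μ : 𝕜) :
    finrank 𝕜 (eigenspace (toLpLin 2 2 A) μ) = finrank 𝕜 (eigenspace A.mulVecLin μ) := by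
  have h : eigenspace (toLpLin 2 2 A) μ =
      (eigenspace A.mulVecLin μ).comap (WithLp.linearEquiv 2 𝕜 (n → 𝕜)).toLinearMap := by
    ext x
    simp only [mem_eigenspace_iff, Submodule.mem_comap, toLpLin_apply]
    rw [← (WithLp.ofLp_injective 2).eq_iff]
    simp
  rw [h, Submodule.comap_equiv_eq_map_symm, LinearEquiv.finrank_map_eq]

theorem IsHermitian.card_filter_eigenvalues_eq {A : Matrix n n 𝕜} (hA : A.IsHermitian) (μ : 𝕜) :
    #{i | (hA.eigenvalues i : 𝕜) = μ} = finrank 𝕜 (eigenspace A.mulVecLin μ) := by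
  rw [← finrank_eigenspace_toLpLin,
    ← (isSymmetric_toEuclideanLin_iff.mpr hA).card_filter_eigenvalues_eq finrank_euclideanSpace]
  exact Finset.card_equiv (Fintype.equivOfCardEq (Fintype.card_fin _)).symm
    (fun i => by simp only [Finset.mem_filter, Finset.mem_univ, true_and]; rfl)

theorem IsHermitian.sum_finrank_eigenspace_smul {M : Type*} [AddCommMonoid M]
    {A : Matrix n n 𝕜} (hA : A.IsHermitian) {S : Finset ℝ} (hS : spectrum ℝ A ⊆ S)
    (f : ℝ → M) :
    ∑ t ∈ S, finrank 𝕜 (eigenspace A.mulVecLin (t : 𝕜)) • f t = ∑ i, f (hA.eigenvalues i) := by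
  rw [← Finset.sum_fiberwise_of_maps_to (g := hA.eigenvalues)
    (fun i _ => hS (hA.eigenvalues_mem_spectrum_real i))]
  refine Finset.sum_congr rfl fun t _ => ?_
  rw [← hA.card_filter_eigenvalues_eq,
    Finset.sum_congr rfl fun i hi => by rw [(Finset.mem_filter.mp hi).2], Finset.sum_const]
  simp

theorem hasEigenvalue_mulVecLin_of_mem_spectrum {K : Type*} [Field K] {A : Matrix n n K} {μ : K}
    (hμ : μ ∈ spectrum K A) : HasEigenvalue A.mulVecLin μ :=
  HasEigenvalue.of_mem_spectrum (by rwa [← toLin'_apply', spectrum_toLin'])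

end Matrix

namespace SimpleGraph

variable {V : Type*} {G : SimpleGraph V} [DecidableRel G.Adj]

theorem adjMatrix_compl [DecidableEq V] (R : Type*) [AddCommGroup R] [One R] :
    Gᶜ.adjMatrix R = of 1 - 1 - G.adjMatrix R := by
  rw [← adjMatrix_completeGraph_eq_of_one_sub_one,
    ← IsCompl.adjMatrix_add_adjMatrix_eq_adjMatrix_completeGraph R (isCompl_compl (x := G)),
    add_sub_cancel_left]

variable [Fintype V]

theorem IsRegularOfDegree.eq_top_of_card_eq {k : ℕ} (hG : G.IsRegularOfDegree k)
    (hcard : Fintype.card V = k + 1) : G = ⊤ :=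
  eq_top_iff_forall_isUniversal.mpr fun v =>
    (G.degree_eq_card_sub_one v).mp (by rw [hG v, hcard, Nat.add_sub_cancel])

theorem IsRegularOfDegree.sum_eq_zero_of_mulVec_eq_smul {R : Type*} [CommRing R]
    [NoZeroDivisors R] {k : ℕ} (hG : G.IsRegularOfDegree k) {x : V → R} {t : R}
    (hx : G.adjMatrix R *ᵥ x = t • x) (ht : t ≠ k) : ∑ v, x v = 0 := by
  have hrow : 1 ᵥ* G.adjMatrix R = Function.const V (k : R) := by
    ext v
    simp [hG v]
  have h : (k : R) * ∑ v, x v = t * ∑ v, x v := by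
    calc (k : R) * ∑ v, x v = (1 ᵥ* G.adjMatrix R) ⬝ᵥ x := by
          rw [hrow, dotProduct, Finset.mul_sum]; rfl
      _ = 1 ⬝ᵥ (G.adjMatrix R *ᵥ x) := (dotProduct_mulVec _ _ _).symm
      _ = t * ∑ v, x v := by rw [hx, dotProduct_smul, one_dotProduct, smul_eq_mul]
  have hkt : (k : R) - t ≠ 0 := sub_ne_zero.mpr ht.symm
  exact (mul_eq_zero.mp (by linear_combination h)).resolve_left hkt

variable [DecidableEq V] {n k l μ : ℕ}

/-- `A² = kI + λA + μ(J - I - A)` applied to an eigenvector `x` of `A`. -/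
theorem IsSRGWith.smul_eq_of_mulVec_eq_smul {R : Type*} [CommRing R] (h : G.IsSRGWith n k l μ)
    {x : V → R} {t : R} (hx : G.adjMatrix R *ᵥ x = t • x) :
    (t ^ 2 - l * t - k + μ * (1 + t)) • x = (μ : R) • (of 1 *ᵥ x) := by
  have hsq : G.adjMatrix R ^ 2 *ᵥ x = t ^ 2 • x := by
    rw [pow_two, ← mulVec_mulVec, hx, mulVec_smul, hx, smul_smul, pow_two]
  simp only [h.matrix_eq, adjMatrix_compl, add_mulVec, sub_mulVec, ← Nat.cast_smul_eq_nsmul R,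
    smul_mulVec, one_mulVec, hx] at hsq
  linear_combination (norm := module) -hsq

theorem IsSRGWith.eigenvalue_sq_eq {R : Type*} [CommRing R] [IsDomain R]
    (h : G.IsSRGWith n k l μ) {x : V → R} {t : R} (hx : G.adjMatrix R *ᵥ x = t • x)
    (hx0 : x ≠ 0) (hsum : ∑ v, x v = 0) :
    t ^ 2 = l * t + k - μ * (1 + t) := by
  have hJ : (of 1 : Matrix V V R) *ᵥ x = 0 := by
    ext v
    simp [mulVec, dotProduct, hsum]
  have h0 := h.smul_eq_of_mulVec_eq_smul hx
  rw [hJ, smul_zero, smul_eq_zero] at h0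
  linear_combination h0.resolve_right hx0

theorem IsSRGWith.degree_sq_eq {R : Type*} [CommRing R] [Nonempty V] (h : G.IsSRGWith n k l μ) :
    (k : R) ^ 2 = l * k + k + μ * (n - 1 - k) := by
  have hk : G.adjMatrix R *ᵥ 1 = (k : R) • 1 := by
    ext v
    simp [h.regular v]
  have h1 := congrFun (h.smul_eq_of_mulVec_eq_smul hk) (Classical.arbitrary V)
  simp [mulVec, dotProduct, h.card] at h1
  linear_combination h1

end SimpleGraph

theorem params_eq_negLatinSquare_of_relations {n k l μ m r s : ℝ} (hrs : r ≠ s) (hk : k ≠ 0)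
    (hn : n ≠ k + 1) (hdim : n = 1 + m + k) (htrace : k + m * r + k * s = 0)
    (hr : r ^ 2 = l * r + k - μ * (1 + r)) (hs : s ^ 2 = l * s + k - μ * (1 + s))
    (hdeg : k ^ 2 = l * k + k + μ * (n - 1 - k)) :
    n = (r - s) ^ 2 ∧ k = r * (r - s + 1) ∧ l = (r + 1) * (r + 2) - (r - s) - 2 ∧
      μ = r * (r + 1) := by
  have hsum : r + s = l - μ :=
    mul_left_cancel₀ (sub_ne_zero.mpr hrs) (by linear_combination hr - hs)
  have hprod : r * s = μ - k := by linear_combination r * hsum - hr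
  have htrace_sq : k ^ 2 + m * r ^ 2 + k * s ^ 2 = n * k := by
    linear_combination hdeg + m * hr + k * hs + (l - μ) * htrace - (k - μ) * hdim
  have hn' : n = k + s ^ 2 - r - r * s :=
    mul_left_cancel₀ hk (by linear_combination -htrace_sq + r * htrace)
  have hm : m = (1 + s) * (s - 1 - r) := by linear_combination hn' - hdim
  have hs1 : 1 + s ≠ 0 := fun hs1 => hn (by linear_combination hn' + (s - 1 - r) * hs1)
  have hk' : k = r * (r - s + 1) :=
    mul_left_cancel₀ hs1 (by linear_combination htrace - r * hm)
  have hμ : μ = r * (r + 1) := by linear_combination hk' - hprod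
  exact ⟨by linear_combination hn' + hk', hk', by linear_combination hμ - hsum, hμ⟩

theorem srg_k_eq_m2_is_negative_latin_square_type_general
    (n k l μ : ℕ) (G : SimpleGraph (Fin n)) [DecidableRel G.Adj]
    (hsrg : G.IsSRGWith n k l μ) (hnc : G ≠ ⊤)
    (r s : ℝ) (m₁ m₂ : ℕ)
    (hr : 0 ≤ r) (hs : s < 0)
    (hspec : spectrum ℝ (G.adjMatrix ℝ) = {(k : ℝ), r, s})
    (hkr : (k : ℝ) ≠ r) (hks : (k : ℝ) ≠ s)
    (hdimk : Module.finrank ℝ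
      (Module.End.eigenspace (G.adjMatrix ℝ).mulVecLin (k : ℝ)) = 1)
    (hdimr : Module.finrank ℝ
      (Module.End.eigenspace (G.adjMatrix ℝ).mulVecLin r) = m₁)
    (hdims : Module.finrank ℝ
      (Module.End.eigenspace (G.adjMatrix ℝ).mulVecLin s) = m₂)
    (heq : k = m₂)
    (v g : ℝ) (hv : v = r - s) (hg : g = r) :
    (n : ℝ) = v ^ 2 ∧ (k : ℝ) = g * (v + 1) ∧
      (l : ℝ) = (g + 1) * (g + 2) - v - 2 ∧ (μ : ℝ) = g * (g + 1) := by
  subst v g heq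
  have hA := G.isHermitian_adjMatrix ℝ
  have hrs : r ≠ s := by linarith
  have hS : spectrum ℝ (G.adjMatrix ℝ) ⊆ ({(k : ℝ), r, s} : Finset ℝ) := by simp [hspec]
  have hsum (f : ℝ → ℝ) : f k + m₁ * f r + k * f s = ∑ i, f (hA.eigenvalues i) := by
    rw [← hA.sum_finrank_eigenspace_smul hS, Finset.sum_insert (by simp [hkr, hks]),
      Finset.sum_pair hrs]
    simp [hdimk, hdimr, hdims, add_assoc]
  have hdim : (n : ℝ) = 1 + m₁ + k := by simpa [add_assoc] using (hsum 1).symm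
  have htrace : (k : ℝ) + m₁ * r + k * s = 0 := by
    simpa using (hsum id).trans (by simpa using hA.trace_eq_sum_eigenvalues.symm)
  have heig (t : ℝ) (ht : t ∈ ({r, s} : Set ℝ)) : HasEigenvalue (G.adjMatrix ℝ).mulVecLin t :=
    hasEigenvalue_mulVecLin_of_mem_spectrum (by rw [hspec]; exact Set.subset_insert _ _ ht)
  have hk : (k : ℝ) ≠ 0 := by
    rw [Nat.cast_ne_zero, ← hdims, Ne, Submodule.finrank_eq_zero]
    exact hasEigenvalue_iff.mp (heig s (by simp))
  have hn : (n : ℝ) ≠ k + 1 := by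
    exact_mod_cast fun h => hnc (hsrg.regular.eq_top_of_card_eq (by simpa using h))
  obtain ⟨xr, hxr, hxr0⟩ := (heig r (by simp)).exists_hasEigenvector
  obtain ⟨xs, hxs, hxs0⟩ := (heig s (by simp)).exists_hasEigenvector
  rw [mem_eigenspace_iff, mulVecLin_apply] at hxr hxs
  have : Nonempty (Fin n) := ⟨(Function.ne_iff.mp hxs0).choose⟩
  exact params_eq_negLatinSquare_of_relations hrs hk hn hdim htrace
    (hsrg.eigenvalue_sq_eq hxr hxr0 (hsrg.regular.sum_eq_zero_of_mulVec_eq_smul hxr hkr.symm))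
    (hsrg.eigenvalue_sq_eq hxs hxs0 (hsrg.regular.sum_eq_zero_of_mulVec_eq_smul hxs hks.symm))
    hsrg.degree_sq_eq

/-- A connected, non-complete strongly regular graph whose adjacency matrix has
exactly three distinct real eigenvalues `k, r, s` (`r ≥ 0 > s`) with eigenspace
dimensions `1, m₁, m₂`: if `k = m₂` then, with `v = r - s` and `g = r`, the
graph has negative Latin square type parameters `NL_g(v)`. -/
theorem srg_k_eq_m2_is_negative_latin_square_type
    (n k l μ : ℕ) (G : SimpleGraph (Fin n)) [DecidableRel G.Adj]
    (hsrg : G.IsSRGWith n k l μ) (hconn : G.Connected) (hnc : G ≠ ⊤)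
    (r s : ℝ) (m₁ m₂ : ℕ)
    (hr : 0 ≤ r) (hs : s < 0)
    (hspec : spectrum ℝ (G.adjMatrix ℝ) = {(k : ℝ), r, s})
    (hkr : (k : ℝ) ≠ r) (hks : (k : ℝ) ≠ s)
    (hdimk : Module.finrank ℝ
      (Module.End.eigenspace (G.adjMatrix ℝ).mulVecLin (k : ℝ)) = 1)
    (hdimr : Module.finrank ℝ
      (Module.End.eigenspace (G.adjMatrix ℝ).mulVecLin r) = m₁)
    (hdims : Module.finrank ℝ
      (Module.End.eigenspace (G.adjMatrix ℝ).mulVecLin s) = m₂)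
    (heq : k = m₂)
    (v g : ℝ) (hv : v = r - s) (hg : g = r) :
    (n : ℝ) = v ^ 2 ∧ (k : ℝ) = g * (v + 1) ∧
      (l : ℝ) = (g + 1) * (g + 2) - v - 2 ∧ (μ : ℝ) = g * (g + 1) :=
  srg_k_eq_m2_is_negative_latin_square_type_general n k l μ G hsrg hnc r s m₁ m₂ hr hs hspec hkr hks
    hdimk hdimr hdims heq v g hv hg
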